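/- arXiv:1604.02307 — 2 statements merged into one kernel-verified Lean document; each statement's English description precedes it below -/
import Mathlib

section
/- Assume: ν is a Lévy measure on ℝ with ∫_{|x|>1} |x| ν(dx) < ∞, there exist θ ∈ (0, 2] and C₀ > 0 with ν({x : |x| ≥ t}) ≤ C₀ t^{−θ} for all t ≥ 1, and there is β ∈ [0, 2) such that ∫_{|x|≤1} |x|^r ν(dx) < ∞ for every r > β; σ : ℝ × Ω → ℝ is a jointly measurable process on a probability space (Ω, F, P) with |σ_s(ω)| ≤ M for all s ∈ [−δ, ∞), ω ∈ Ω, for some M > 0; there exist ρ ∈ (0, min(1, θ)] and β' > β with β' ≥ 1 such that E[ ∫_ℝ max(|H_s|^ρ, |H_s|^{β'}) ds ] < ∞, where H_s = g^{(k)}(−s) σ_s 1_{(−∞,−δ]}(s); and α > k − 1/max(β, 1). Then for every t > 0 one has ∫_0^t E[ Φ_{1,ν}( f_t(u, ·) ) ] du < ∞, where f_t(u, s)(ω) = g^{(k)}(u − s) σ_s(ω) 1_{[0,t]}(u) 1_{(−∞,u)}(s); consequently E[ ∫_0^t ‖ f_t(u, ·) ‖_{1,ν} du ] < ∞. -/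
/-!
Split `φ₁(f(s)·x)` according to `s ≥ -δ` or `s < -δ`. In both regimes
`φ₁(a·x) ≤ max(A^p, A^q) · w_r(x)` whenever `|a| ≤ A` and `p ≤ 1 ≤ r ≤ min(q, 2)`, where
`w_r(x) = |x|^r` for `|x| ≤ 1` and `|x|` otherwise; `w_r` is `ν`-integrable as soon as `r > β`.

Near the diagonal (`-δ ≤ s < u`) the kernel is at most `c (u - s)^{α-k}`, and we take `p = 1`,
`q = r` with `β < r` and `(k - α) r < 1`, which `α > k - 1/max(β, 1)` allows: the bound is then
integrable in `s`, uniformly in `u`. Far from it (`s < -δ`), monotonicity of `|g^{(k)}|` gives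
`|f_t(u, s)| ≤ |H_s|`, and `p = ρ`, `q = β'`, `r = min(β', 2)` turn the bound into the integrand
of the assumed moment of `H`. Hence `Φ_{1,ν}(f_t(u, ·)) ≤ A + B ∫ max(|H_s|^ρ, |H_s|^{β'}) ds`
uniformly in `u`, and `‖F‖_{1,ν} ≤ 1 + Φ_{1,ν}(F)` gives the second claim.
-/

open MeasureTheory Set
open scoped ENNReal

noncomputable section

/-- `φ_q(x) = |x|^q · 1_{|x|>1} + x² · 1_{|x|≤1}`. -/
def phi (q x : ℝ) : ℝ := if |x| ≤ 1 then x ^ 2 else |x| ^ q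

/-- `Φ_{q,ν}(F) = ∫_ℝ ∫_ℝ φ_q(F(s)·u) ds ν(du)`. -/
def PhiFun (q : ℝ) (ν : Measure ℝ) (F : ℝ → ℝ) : ℝ≥0∞ :=
  ∫⁻ u : ℝ, (∫⁻ s : ℝ, ENNReal.ofReal (phi q (F s * u))) ∂ν

/-- `‖F‖_{q,ν} = inf {λ > 0 : Φ_{q,ν}(F/λ) ≤ 1}`, with `inf ∅ = ∞`. -/
def levyNorm (q : ℝ) (ν : Measure ℝ) (F : ℝ → ℝ) : ℝ≥0∞ :=
  sInf ((fun l : ℝ => ENNReal.ofReal l) ''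
    {l : ℝ | 0 < l ∧ PhiFun q ν (fun s => F s / l) ≤ 1})

/-- The random field `f_t(u, s)(ω) = g^{(k)}(u−s) σ_s(ω) 1_{[0,t]}(u) 1_{(−∞,u)}(s)`. -/
def ftField {Ω : Type*} (g : ℝ → ℝ) (k : ℕ) (σ : ℝ → Ω → ℝ) (t u s : ℝ) (ω : Ω) : ℝ :=
  (if 0 ≤ u ∧ u ≤ t then (1 : ℝ) else 0) * (if s < u then (1 : ℝ) else 0) *
    (iteratedDeriv k g (u - s) * σ s ω)

def levyWeight (r x : ℝ) : ℝ := if |x| ≤ 1 then |x| ^ r else |x|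

lemma measurable_levyWeight (r : ℝ) : Measurable (levyWeight r) :=
  Measurable.ite (measurableSet_le measurable_id.abs measurable_const)
    (measurable_id.abs.pow_const r) measurable_id.abs

lemma lintegral_levyWeight_lt_top {ν : Measure ℝ} {r : ℝ}
    (hsmall : ∫⁻ x in {x : ℝ | |x| ≤ 1}, ENNReal.ofReal (|x| ^ r) ∂ν < ⊤)
    (hlarge : ∫⁻ x in {x : ℝ | 1 < |x|}, ENNReal.ofReal |x| ∂ν < ⊤) :
    ∫⁻ x, ENNReal.ofReal (levyWeight r x) ∂ν < ⊤ := by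
  have hS : MeasurableSet {x : ℝ | |x| ≤ 1} :=
    measurableSet_le measurable_id.abs measurable_const
  have hcompl : {x : ℝ | |x| ≤ 1}ᶜ = {x : ℝ | 1 < |x|} := by ext; simp
  have hL : MeasurableSet {x : ℝ | 1 < |x|} := hcompl ▸ hS.compl
  rw [← lintegral_add_compl _ hS,
    setLIntegral_congr_fun hS fun x (hx : |x| ≤ 1) => by rw [levyWeight, if_pos hx], hcompl,
    setLIntegral_congr_fun hL fun x (hx : 1 < |x|) => by
      rw [levyWeight, if_neg hx.not_ge]]
  exact ENNReal.add_lt_top.2 ⟨hsmall, hlarge⟩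

lemma phi_one_le_abs (y : ℝ) : phi 1 y ≤ |y| := by
  unfold phi
  split_ifs with h
  · nlinarith [abs_nonneg y, sq_abs y]
  · rw [Real.rpow_one]

lemma phi_one_le_rpow {r : ℝ} (hr1 : 1 ≤ r) (hr2 : r ≤ 2) (y : ℝ) : phi 1 y ≤ |y| ^ r := by
  unfold phi
  split_ifs with h
  · rw [← sq_abs, ← Real.rpow_two]
    exact Real.rpow_le_rpow_of_exponent_ge' (abs_nonneg y) h (by linarith) hr2
  · exact Real.rpow_le_rpow_of_exponent_le (le_of_not_ge h) hr1

lemma self_le_max_rpow {A p q : ℝ} (hA : 0 ≤ A) (hp0 : 0 ≤ p) (hp1 : p ≤ 1) (hq : 1 ≤ q) :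
    A ≤ max (A ^ p) (A ^ q) := by
  rcases le_total A 1 with hA1 | hA1
  · exact le_max_of_le_left <| by
      simpa using Real.rpow_le_rpow_of_exponent_ge' hA hA1 hp0 hp1
  · exact le_max_of_le_right <| by simpa using Real.rpow_le_rpow_of_exponent_le hA1 hq

lemma phi_one_mul_le {a A p q r : ℝ} (ha : |a| ≤ A) (hp0 : 0 ≤ p) (hp1 : p ≤ 1)
    (hr1 : 1 ≤ r) (hr2 : r ≤ 2) (hrq : r ≤ q) (x : ℝ) :
    phi 1 (a * x) ≤ max (A ^ p) (A ^ q) * levyWeight r x := by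
  have hA : 0 ≤ A := (abs_nonneg a).trans ha
  unfold levyWeight
  split_ifs with hx
  · rcases le_total A 1 with hA1 | hA1
    · have hax : |a * x| ≤ 1 := by
        rw [abs_mul]; nlinarith [abs_nonneg a, abs_nonneg x]
      calc phi 1 (a * x) = |a| ^ (2 : ℝ) * |x| ^ (2 : ℝ) := by
            rw [phi, if_pos hax, Real.rpow_two, Real.rpow_two, ← mul_pow, ← abs_mul, sq_abs]
        _ ≤ A ^ p * |x| ^ r := by
            refine mul_le_mul ?_ ?_ (by positivity) (by positivity)
            · exact (Real.rpow_le_rpow (abs_nonneg a) ha (by norm_num)).trans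
                (Real.rpow_le_rpow_of_exponent_ge' hA hA1 hp0 (by linarith))
            · exact Real.rpow_le_rpow_of_exponent_ge' (abs_nonneg x) hx (by linarith) hr2
        _ ≤ _ := by gcongr; exact le_max_left _ _
    · calc phi 1 (a * x) ≤ |a| ^ r * |x| ^ r := by
            rw [← Real.mul_rpow (abs_nonneg a) (abs_nonneg x), ← abs_mul]
            exact phi_one_le_rpow hr1 hr2 _
        _ ≤ A ^ q * |x| ^ r := by
            gcongr
            exact (Real.rpow_le_rpow (abs_nonneg a) ha (by linarith)).trans
              (Real.rpow_le_rpow_of_exponent_le hA1 hrq)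
        _ ≤ _ := by gcongr; exact le_max_right _ _
  · calc phi 1 (a * x) ≤ |a| * |x| := (phi_one_le_abs _).trans_eq (abs_mul a x)
      _ ≤ _ := by
          gcongr
          exact ha.trans (self_le_max_rpow hA hp0 hp1 (hr1.trans hrq))

lemma PhiFun_le_of_le {q : ℝ} {ν : Measure ℝ} {F : ℝ → ℝ} {a b w₁ w₂ : ℝ → ℝ≥0∞}
    (ha : Measurable a) (hw₁ : Measurable w₁) (hw₂ : Measurable w₂) (hw₂_ne : ∀ x, w₂ x ≠ ⊤)
    (h : ∀ s x, ENNReal.ofReal (phi q (F s * x)) ≤ a s * w₁ x + b s * w₂ x) :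
    PhiFun q ν F ≤ (∫⁻ s, a s) * ∫⁻ x, w₁ x ∂ν + (∫⁻ s, b s) * ∫⁻ x, w₂ x ∂ν := by
  calc PhiFun q ν F ≤ ∫⁻ x, ((∫⁻ s, a s) * w₁ x + (∫⁻ s, b s) * w₂ x) ∂ν := by
        refine lintegral_mono fun x => (lintegral_mono (h · x)).trans_eq ?_
        rw [lintegral_add_left (ha.mul_const _), lintegral_mul_const _ ha,
          lintegral_mul_const' _ _ (hw₂_ne x)]
    _ = _ := by
        rw [lintegral_add_left (hw₁.const_mul _), lintegral_const_mul _ hw₁,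
          lintegral_const_mul _ hw₂]

lemma phi_one_div_le {l : ℝ} (hl : 1 ≤ l) (y : ℝ) : phi 1 (y / l) ≤ phi 1 y / l := by
  have hl0 : 0 < l := one_pos.trans_le hl
  have habs : |y / l| = |y| / l := by rw [abs_div, abs_of_pos hl0]
  unfold phi
  rw [Real.rpow_one, Real.rpow_one]
  split_ifs with h1 h2 h2
  · rw [div_pow]
    exact div_le_div_of_nonneg_left (sq_nonneg y) hl0 (by nlinarith)
  · rw [← sq_abs, habs]
    have : 0 ≤ |y| / l := by positivity
    nlinarith
  · exact absurd (habs ▸ (div_le_self (abs_nonneg y) hl).trans h2) h1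
  · exact habs.le

lemma PhiFun_div_le (ν : Measure ℝ) (F : ℝ → ℝ) {l : ℝ} (hl : 1 ≤ l) :
    PhiFun 1 ν (fun s => F s / l) ≤ ENNReal.ofReal l⁻¹ * PhiFun 1 ν F := by
  unfold PhiFun
  rw [← lintegral_const_mul' _ _ ENNReal.ofReal_ne_top]
  refine lintegral_mono fun x => ?_
  rw [← lintegral_const_mul' _ _ ENNReal.ofReal_ne_top]
  refine lintegral_mono fun s => ?_
  rw [← ENNReal.ofReal_mul (by positivity), div_mul_eq_mul_div, inv_mul_eq_div]
  exact ENNReal.ofReal_le_ofReal (phi_one_div_le hl _)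

lemma levyNorm_le_one_add (ν : Measure ℝ) (F : ℝ → ℝ) :
    levyNorm 1 ν F ≤ 1 + PhiFun 1 ν F := by
  obtain hΦ | hΦ := eq_or_ne (PhiFun 1 ν F) ⊤
  · simp [hΦ]
  set l := (PhiFun 1 ν F).toReal + 1
  have hl : 1 ≤ l := le_add_of_nonneg_left ENNReal.toReal_nonneg
  have hdiv : PhiFun 1 ν (fun s => F s / l) ≤ 1 :=
    calc PhiFun 1 ν (fun s => F s / l) ≤ ENNReal.ofReal l⁻¹ * PhiFun 1 ν F := PhiFun_div_le ν F hl
      _ = ENNReal.ofReal ((PhiFun 1 ν F).toReal / l) := by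
          rw [div_eq_inv_mul, ENNReal.ofReal_mul (by positivity), ENNReal.ofReal_toReal hΦ]
      _ ≤ 1 := ENNReal.ofReal_le_one.2 <| (div_le_one₀ (by linarith)).2 (by linarith)
  calc levyNorm 1 ν F ≤ ENNReal.ofReal l := sInf_le ⟨l, ⟨by linarith, hdiv⟩, rfl⟩
    _ = 1 + PhiFun 1 ν F := by
        rw [ENNReal.ofReal_add ENNReal.toReal_nonneg zero_le_one, ENNReal.ofReal_toReal hΦ,
          ENNReal.ofReal_one, add_comm]

lemma exists_exponent_gt_and_neg_one_lt_mul {β e : ℝ} (hβ : β < 2) (he0 : e < 0)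
    (he : -(1 / max β 1) < e) :
    ∃ r, β < r ∧ 1 ≤ r ∧ r ≤ 2 ∧ -1 < e * r := by
  have hm : 0 < max β 1 := one_pos.trans_le (le_max_right _ _)
  have hme : max β 1 < min 2 (1 / -e) := by
    refine lt_min (max_lt hβ one_lt_two) ((lt_div_iff₀ (neg_pos.2 he0)).2 ?_)
    simpa only [mul_one_div_cancel hm.ne'] using mul_lt_mul_of_pos_left (neg_lt.1 he) hm
  obtain ⟨r, hmr, hr⟩ := exists_between hme
  have her := (lt_div_iff₀ (neg_pos.2 he0)).1 (hr.trans_le (min_le_right _ _))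
  exact ⟨r, (le_max_left _ _).trans_lt hmr, (le_max_right _ _).trans hmr.le,
    (hr.trans_le (min_le_left _ _)).le, by linarith⟩

theorem ContDiffOn.continuousOn_iteratedDeriv_of_isOpen {𝕜 F : Type*}
    [NontriviallyNormedField 𝕜] [NormedAddCommGroup F] [NormedSpace 𝕜 F] {f : 𝕜 → F}
    {s : Set 𝕜} {n : ℕ} (hf : ContDiffOn 𝕜 n f s) (hs : IsOpen s) :
    ContinuousOn (iteratedDeriv n f) s :=
  (hf.continuousOn_iteratedDerivWithin le_rfl hs.uniqueDiffOn).congr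
    fun _ hx => (iteratedDerivWithin_of_isOpen hs hx).symm

lemma exists_abs_le_mul_rpow_of_continuousOn {f : ℝ → ℝ} {C₁ δ T e : ℝ} (hC₁ : 0 ≤ C₁)
    (hT : 0 ≤ T) (he : e ≤ 0) (hf : ContinuousOn f (Icc δ T))
    (hsmall : ∀ v ∈ Ioo 0 δ, |f v| ≤ C₁ * v ^ e) :
    ∃ C, 0 ≤ C ∧ ∀ v ∈ Ioc 0 T, |f v| ≤ C * v ^ e := by
  obtain ⟨B, hB⟩ := isCompact_Icc.exists_bound_of_continuousOn hf
  have hB' : 0 ≤ max B 0 * T ^ (-e) := mul_nonneg (le_max_right _ _) (Real.rpow_nonneg hT _)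
  refine ⟨C₁ + max B 0 * T ^ (-e), add_nonneg hC₁ hB', fun v ⟨hv0, hvT⟩ => ?_⟩
  rcases lt_or_ge v δ with hvδ | hvδ
  · calc |f v| ≤ C₁ * v ^ e := hsmall v ⟨hv0, hvδ⟩
      _ ≤ _ := by gcongr; exact le_add_of_nonneg_right hB'
  · calc |f v| ≤ max B 0 * T ^ (-e) * T ^ e := by
          rw [mul_assoc, ← Real.rpow_add (hv0.trans_le hvT), neg_add_cancel, Real.rpow_zero,
            mul_one]
          exact (hB v ⟨hvδ, hvT⟩).trans (le_max_left _ _)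
      _ ≤ max B 0 * T ^ (-e) * v ^ e :=
          mul_le_mul_of_nonneg_left (Real.rpow_le_rpow_of_nonpos hv0 hvT he) hB'
      _ ≤ _ := by gcongr; exact le_add_of_nonneg_left hC₁

lemma lintegral_Ioc_max_mul_rpow_lt_top {c e r T : ℝ} (hc : 0 ≤ c) (he : -1 < e)
    (her : -1 < e * r) :
    ∫⁻ v in Ioc 0 T, ENNReal.ofReal (max (c * v ^ e) ((c * v ^ e) ^ r)) < ⊤ := by
  have hint : IntegrableOn (fun v : ℝ => c * v ^ e + c ^ r * v ^ (e * r)) (Ioc 0 T) :=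
    (intervalIntegrable_iff.1 (((intervalIntegral.intervalIntegrable_rpow' he).const_mul c).add
      ((intervalIntegral.intervalIntegrable_rpow' her).const_mul _))).mono_set Ioc_subset_uIoc
  refine lt_of_le_of_lt (setLIntegral_mono' measurableSet_Ioc fun v hv => ?_)
    hint.lintegral_lt_top
  have hcv : 0 ≤ c * v ^ e := mul_nonneg hc (Real.rpow_nonneg hv.1.le e)
  have hpow : (c * v ^ e) ^ r = c ^ r * v ^ (e * r) := by
    rw [Real.mul_rpow hc (Real.rpow_nonneg hv.1.le e), ← Real.rpow_mul hv.1.le]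
  refine ENNReal.ofReal_le_ofReal (max_le (le_add_of_nonneg_right ?_) ?_)
  · exact hpow ▸ Real.rpow_nonneg hcv r
  · exact hpow ▸ le_add_of_nonneg_left hcv

section ftField

variable {Ω : Type*} {g : ℝ → ℝ} {k : ℕ} {σ : ℝ → Ω → ℝ} {ω : Ω} {t u δ M c e r ρ β' b : ℝ}

lemma ofReal_phi_ftField_le (hu : u ∈ Ioc 0 t)
    (hc : ∀ v ∈ Ioc 0 (t + δ), |iteratedDeriv k g v| ≤ c * v ^ e)
    (hσ : ∀ s ∈ Ici (-δ), |σ s ω| ≤ M)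
    (hdec : ∀ s s' : ℝ, δ < s → s ≤ s' → |iteratedDeriv k g s'| ≤ |iteratedDeriv k g s|)
    (hρ0 : 0 < ρ) (hρ1 : ρ ≤ 1) (hr1 : 1 ≤ r) (hr2 : r ≤ 2) (hb1 : 1 ≤ b) (hb2 : b ≤ 2)
    (hbβ' : b ≤ β') (s x : ℝ) :
    ENNReal.ofReal (phi 1 (ftField g k σ t u s ω * x)) ≤
      (Ioc 0 (t + δ)).indicator
          (fun v => ENNReal.ofReal (max (M * c * v ^ e) ((M * c * v ^ e) ^ r))) (u - s) *
          ENNReal.ofReal (levyWeight r x) +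
        ENNReal.ofReal
          (max (|if s ≤ -δ then iteratedDeriv k g (-s) * σ s ω else 0| ^ ρ)
            (|if s ≤ -δ then iteratedDeriv k g (-s) * σ s ω else 0| ^ β')) *
          ENNReal.ofReal (levyWeight b x) := by
  rcases le_or_gt u s with hus | hsu
  · simp [ftField, hus.not_gt, phi]
  have hF : ftField g k σ t u s ω = iteratedDeriv k g (u - s) * σ s ω := by
    simp [ftField, hu.1.le, hu.2, hsu]
  rw [hF]
  rcases lt_or_ge s (-δ) with hs | hs
  · refine le_add_left ?_
    rw [if_pos hs.le, ← ENNReal.ofReal_mul (by positivity)]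
    refine ENNReal.ofReal_le_ofReal (phi_one_mul_le ?_ hρ0.le hρ1 hb1 hb2 hbβ' x)
    rw [abs_mul, abs_mul]
    exact mul_le_mul_of_nonneg_right (hdec _ _ (by linarith) (by linarith [hu.1])) (abs_nonneg _)
  · have hv : u - s ∈ Ioc 0 (t + δ) := ⟨sub_pos.2 hsu, by linarith [hu.2]⟩
    have hg := hc (u - s) hv
    have hA : |iteratedDeriv k g (u - s) * σ s ω| ≤ M * c * (u - s) ^ e := by
      rw [abs_mul, mul_assoc, mul_comm M]
      exact mul_le_mul hg (hσ s hs) (abs_nonneg _) ((abs_nonneg _).trans hg)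
    refine le_add_right ?_
    rw [indicator_of_mem hv,
      ← ENNReal.ofReal_mul ((abs_nonneg _).trans (hA.trans (le_max_left _ _)))]
    refine ENNReal.ofReal_le_ofReal ?_
    simpa only [Real.rpow_one] using phi_one_mul_le hA zero_le_one le_rfl hr1 hr2 le_rfl x

lemma PhiFun_ftField_le (ν : Measure ℝ) (hu : u ∈ Ioc 0 t)
    (hc : ∀ v ∈ Ioc 0 (t + δ), |iteratedDeriv k g v| ≤ c * v ^ e)
    (hσ : ∀ s ∈ Ici (-δ), |σ s ω| ≤ M)
    (hdec : ∀ s s' : ℝ, δ < s → s ≤ s' → |iteratedDeriv k g s'| ≤ |iteratedDeriv k g s|)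
    (hρ0 : 0 < ρ) (hρ1 : ρ ≤ 1) (hr1 : 1 ≤ r) (hr2 : r ≤ 2) (hb1 : 1 ≤ b) (hb2 : b ≤ 2)
    (hbβ' : b ≤ β') :
    PhiFun 1 ν (fun s => ftField g k σ t u s ω) ≤
      (∫⁻ v in Ioc 0 (t + δ), ENNReal.ofReal (max (M * c * v ^ e) ((M * c * v ^ e) ^ r))) *
          ∫⁻ x, ENNReal.ofReal (levyWeight r x) ∂ν +
        (∫⁻ s, ENNReal.ofReal
          (max (|if s ≤ -δ then iteratedDeriv k g (-s) * σ s ω else 0| ^ ρ)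
            (|if s ≤ -δ then iteratedDeriv k g (-s) * σ s ω else 0| ^ β'))) *
          ∫⁻ x, ENNReal.ofReal (levyWeight b x) ∂ν := by
  rw [← lintegral_indicator measurableSet_Ioc, ← lintegral_sub_left_eq_self _ u]
  refine PhiFun_le_of_le ?_ (measurable_levyWeight r).ennreal_ofReal
    (measurable_levyWeight b).ennreal_ofReal (fun _ => ENNReal.ofReal_ne_top)
    (ofReal_phi_ftField_le hu hc hσ hdec hρ0 hρ1 hr1 hr2 hb1 hb2 hbβ')
  exact (Measurable.indicator (by fun_prop) measurableSet_Ioc).comp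
    (measurable_const.sub measurable_id)

end ftField

lemma lintegral_lintegral_lt_top_of_le {α Ω : Type*} [MeasurableSpace α] [MeasurableSpace Ω]
    {μ : Measure α} [IsFiniteMeasure μ] {P : Measure Ω} [IsFiniteMeasure P]
    {f : α → Ω → ℝ≥0∞} {W : Ω → ℝ≥0∞} {c K : ℝ≥0∞} (hf : ∀ᵐ a ∂μ, ∀ ω, f a ω ≤ c + W ω * K)
    (hc : c ≠ ⊤) (hK : K ≠ ⊤) (hW : ∫⁻ ω, W ω ∂P ≠ ⊤) :
    ∫⁻ a, ∫⁻ ω, f a ω ∂P ∂μ < ⊤ ∧ ∫⁻ ω, ∫⁻ a, f a ω ∂μ ∂P < ⊤ := by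
  have hbound : ∫⁻ ω, (c + W ω * K) ∂P = c * P univ + (∫⁻ ω, W ω ∂P) * K := by
    rw [lintegral_add_left measurable_const, lintegral_const, lintegral_mul_const' _ _ hK]
  have hfin : c * P univ + (∫⁻ ω, W ω ∂P) * K ≠ ⊤ := by finiteness
  constructor
  · calc ∫⁻ a, ∫⁻ ω, f a ω ∂P ∂μ ≤ ∫⁻ _, (c * P univ + (∫⁻ ω, W ω ∂P) * K) ∂μ :=
          lintegral_mono_ae (hf.mono fun a ha => (lintegral_mono (ha ·)).trans_eq hbound)
      _ < ⊤ := by rw [lintegral_const]; finiteness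
  · calc ∫⁻ ω, ∫⁻ a, f a ω ∂μ ∂P ≤ ∫⁻ ω, (c + W ω * K) * μ univ ∂P :=
          lintegral_mono fun ω =>
            (lintegral_mono_ae (hf.mono fun a ha => ha ω)).trans_eq (lintegral_const _)
      _ < ⊤ := by rw [lintegral_mul_const' _ _ (measure_ne_top _ _), hbound]; finiteness

theorem stmt_12_general
    (k : ℕ) (α δ C₁ : ℝ)
    (hαk : α < k) (hδ : 0 < δ) (hC₁ : 0 < C₁)
    (g : ℝ → ℝ)
    (hgsmooth : ContDiffOn ℝ k g (Set.Ioi 0))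
    (hgk : ∀ t ∈ Set.Ioo (0 : ℝ) δ, |iteratedDeriv k g t| ≤ C₁ * t ^ (α - k))
    (hgkdec : ∀ s t : ℝ, δ < s → s ≤ t → |iteratedDeriv k g t| ≤ |iteratedDeriv k g s|)
    (ν : Measure ℝ)
    (hν1mom : ∫⁻ x in {x : ℝ | 1 < |x|}, ENNReal.ofReal |x| ∂ν < ⊤)
    (θ : ℝ)
    (β : ℝ) (hβ2 : β < 2)
    (hβmom : ∀ r : ℝ, β < r → ∫⁻ x in {x : ℝ | |x| ≤ 1}, ENNReal.ofReal (|x| ^ r) ∂ν < ⊤)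
    {Ω : Type*} [MeasurableSpace Ω] (P : Measure Ω) [IsProbabilityMeasure P]
    (σ : ℝ → Ω → ℝ)
    (M : ℝ) (hM : 0 < M) (hbound : ∀ s ∈ Set.Ici (-δ), ∀ ω, |σ s ω| ≤ M)
    (ρ β' : ℝ) (hρ0 : 0 < ρ) (hρ : ρ ≤ min 1 θ) (hβ' : β < β') (hβ'1 : 1 ≤ β')
    (hH : ∫⁻ ω, (∫⁻ s : ℝ, ENNReal.ofReal
        (max (|if s ≤ -δ then iteratedDeriv k g (-s) * σ s ω else 0| ^ ρ)
             (|if s ≤ -δ then iteratedDeriv k g (-s) * σ s ω else 0| ^ β'))) ∂P < ⊤)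
    (hαk' : k - 1 / max β 1 < α) :
    ∀ t : ℝ, 0 < t →
      (∫⁻ u in Set.Ioc (0 : ℝ) t,
          (∫⁻ ω, PhiFun 1 ν (fun s => ftField g k σ t u s ω) ∂P)) < ⊤ ∧
      (∫⁻ ω, (∫⁻ u in Set.Ioc (0 : ℝ) t,
          levyNorm 1 ν (fun s => ftField g k σ t u s ω)) ∂P) < ⊤ := by
  intro t ht
  obtain ⟨r, hβr, hr1, hr2, hr⟩ :=
    exists_exponent_gt_and_neg_one_lt_mul hβ2 (sub_neg.2 hαk) (by linarith : -(1 / max β 1) < α - k)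
  obtain ⟨c, hc0, hc⟩ := exists_abs_le_mul_rpow_of_continuousOn (T := t + δ) hC₁.le (by linarith)
    (sub_nonpos.2 hαk.le) ((hgsmooth.continuousOn_iteratedDeriv_of_isOpen isOpen_Ioi).mono
      fun v hv => hδ.trans_le hv.1) hgk
  have he : -1 < α - k := by
    linarith [div_le_one_of_le₀ (le_max_right β 1) (zero_le_one.trans (le_max_right β 1))]
  have hb : β < min β' 2 := lt_min hβ' hβ2
  have hΦ : ∀ u ∈ Ioc 0 t, ∀ ω, PhiFun 1 ν (fun s => ftField g k σ t u s ω) ≤ _ :=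
    fun u hu ω => PhiFun_ftField_le ν hu hc (fun s hs => hbound s hs ω) hgkdec hρ0
      (hρ.trans (min_le_left _ _)) hr1 hr2 (le_min hβ'1 one_le_two) (min_le_right _ _)
      (min_le_left _ _)
  have hD := lintegral_Ioc_max_mul_rpow_lt_top (T := t + δ) (mul_nonneg hM.le hc0) he hr
  have hKr := lintegral_levyWeight_lt_top (hβmom r hβr) hν1mom
  have hKb := lintegral_levyWeight_lt_top (hβmom _ hb) hν1mom
  have hae := ae_restrict_mem (μ := volume) (measurableSet_Ioc (a := (0 : ℝ)) (b := t))
  exact ⟨(lintegral_lintegral_lt_top_of_le (hae.mono fun u hu ω => hΦ u hu ω)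
      (by finiteness) hKb.ne hH.ne).1,
    (lintegral_lintegral_lt_top_of_le (hae.mono fun u hu ω =>
      ((levyNorm_le_one_add ν _).trans (add_le_add_right (hΦ u hu ω) 1)).trans_eq
        (add_assoc _ _ _).symm) (by finiteness) hKb.ne hH.ne).2⟩

/-- Lemma 4.13: integrability of the `Φ_{1,ν}`-functional of the random field `f_t`. -/
theorem stmt_12
    (k : ℕ) (hk : 1 ≤ k) (α δ C₁ : ℝ)
    (hα : 0 < α) (hαk : α < k) (hδ : 0 < δ) (hC₁ : 0 < C₁)
    (g : ℝ → ℝ)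
    (hg0 : ∀ t ≤ (0 : ℝ), g t = 0)
    (hgsmooth : ContDiffOn ℝ k g (Set.Ioi 0))
    (hgα : ∀ t ∈ Set.Ioo (0 : ℝ) δ, |g t| ≤ C₁ * t ^ α)
    (hgk : ∀ t ∈ Set.Ioo (0 : ℝ) δ, |iteratedDeriv k g t| ≤ C₁ * t ^ (α - k))
    (hgkdec : ∀ s t : ℝ, δ < s → s ≤ t → |iteratedDeriv k g t| ≤ |iteratedDeriv k g s|)
    (ν : Measure ℝ) (hν0 : ν {0} = 0)
    (hν2 : ∫⁻ x : ℝ, ENNReal.ofReal (min 1 (x ^ 2)) ∂ν < ⊤)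
    (hν1mom : ∫⁻ x in {x : ℝ | 1 < |x|}, ENNReal.ofReal |x| ∂ν < ⊤)
    (θ : ℝ) (hθ0 : 0 < θ) (hθ2 : θ ≤ 2) (C₀ : ℝ) (hC₀ : 0 < C₀)
    (htail : ∀ t : ℝ, 1 ≤ t → ν {x : ℝ | t ≤ |x|} ≤ ENNReal.ofReal (C₀ * t ^ (-θ)))
    (β : ℝ) (hβ0 : 0 ≤ β) (hβ2 : β < 2)
    (hβmom : ∀ r : ℝ, β < r → ∫⁻ x in {x : ℝ | |x| ≤ 1}, ENNReal.ofReal (|x| ^ r) ∂ν < ⊤)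
    {Ω : Type*} [MeasurableSpace Ω] (P : Measure Ω) [IsProbabilityMeasure P]
    (σ : ℝ → Ω → ℝ) (hmeas : Measurable (Function.uncurry σ))
    (M : ℝ) (hM : 0 < M) (hbound : ∀ s ∈ Set.Ici (-δ), ∀ ω, |σ s ω| ≤ M)
    (ρ β' : ℝ) (hρ0 : 0 < ρ) (hρ : ρ ≤ min 1 θ) (hβ' : β < β') (hβ'1 : 1 ≤ β')
    (hH : ∫⁻ ω, (∫⁻ s : ℝ, ENNReal.ofReal
        (max (|if s ≤ -δ then iteratedDeriv k g (-s) * σ s ω else 0| ^ ρ)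
             (|if s ≤ -δ then iteratedDeriv k g (-s) * σ s ω else 0| ^ β'))) ∂P < ⊤)
    (hαk' : k - 1 / max β 1 < α) :
    ∀ t : ℝ, 0 < t →
      (∫⁻ u in Set.Ioc (0 : ℝ) t,
          (∫⁻ ω, PhiFun 1 ν (fun s => ftField g k σ t u s ω) ∂P)) < ⊤ ∧
      (∫⁻ ω, (∫⁻ u in Set.Ioc (0 : ℝ) t,
          levyNorm 1 ν (fun s => ftField g k σ t u s ω)) ∂P) < ⊤ :=
  stmt_12_general k α δ C₁ hαk hδ hC₁ g hgsmooth hgk hgkdec ν hν1mom θ β hβ2 hβmom P σ M hM hbound ρ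
    β' hρ0 hρ hβ' hβ'1 hH hαk'

end
end

section
/- Let k ≥ 1 be an integer and α > 0. Then: (a) there exists C > 0 such that |h_k(x)| ≤ C x^{α−k} for all x ≥ k + 1; (b) for every p > 0 with p(α − k) < −1 one has Σ_{l=0}^∞ sup_{u ∈ [0,1]} |h_k(l + u)|^p < ∞; (c) for every β > 0 with β(α − k) < −1 one has ∫_ℝ |h_k(x)|^β dx < ∞. -/
open MeasureTheory Set
open scoped ENNReal

noncomputable section

/-- `h_k(x) = Σ_{j=0}^k (−1)^j · binom(k, j) · (x − j)₊^α`. -/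
def hkFun (k : ℕ) (α : ℝ) (x : ℝ) : ℝ :=
  ∑ j ∈ Finset.range (k + 1),
    (-1 : ℝ) ^ j * (k.choose j) * (max (x - j) 0) ^ α

/-!
`h_k(x)` is the `k`-th forward difference of `g(y) = y₊^α` at `x - k`. Applying the mean value
theorem once per difference bounds `|Δ^k g(y)|` by the supremum of `|g⁽ᵏ⁾|` on `[y, y + k]`, and
`g⁽ᵏ⁾(t) = α(α-1)⋯(α-k+1) t^(α-k)` for `t > 0`. For `x ≥ k + 1` every `t ∈ [x - k, x]` is within
a factor `k + 1` of `x`, which gives the decay `O(x^(α-k))`. The summability and integrability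
claims then follow by comparison with `Σ l^(p(α-k))` and `∫ x^(β(α-k))`, since `h_k` is continuous
and vanishes on `(-∞, 0]`.
-/

open Finset fwdDiff

theorem abs_fwdDiff_iter_le_of_hasDerivAt {a x M : ℝ} (n : ℕ) (f : ℕ → ℝ → ℝ)
    (hf : ∀ i y, a < y → HasDerivAt (f i) (f (i + 1) y) y) (hx : a < x)
    (hM : ∀ y ∈ Icc x (x + n), |f n y| ≤ M) :
    |(Δ_[1])^[n] (f 0) x| ≤ M := by
  induction n generalizing f with
  | zero => simpa using hM x (by simp)
  | succ n ih =>
    -- `Δ^[n+1] f₀ = Δ^[n] (Δ f₀)`, and `i ↦ Δ fᵢ` is again a chain of derivatives.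
    rw [Function.iterate_succ_apply]
    refine ih (fun i => Δ_[1] (f i)) (fun i y hy => ?_) fun y hy => ?_
    · exact ((hf i (y + 1) (by linarith)).comp_add_const y 1).sub (hf i y hy)
    have hderiv : ∀ z ∈ Icc y (y + 1),
        HasDerivWithinAt (f n) (f (n + 1) z) (Icc y (y + 1)) z :=
      fun z hz => (hf n z (by linarith [hx, hy.1, hz.1])).hasDerivWithinAt
    have hbound : ∀ z ∈ Ico y (y + 1), ‖f (n + 1) z‖ ≤ M := fun z hz =>
      hM z ⟨by linarith [hy.1, hz.1], by push_cast; linarith [hy.2, hz.2]⟩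
    simpa [fwdDiff] using
      norm_image_sub_le_of_norm_deriv_le_segment' hderiv hbound (y + 1) (by simp)

theorem hkFun_eq_fwdDiff_iter (k : ℕ) (α x : ℝ) :
    hkFun k α x = (Δ_[1])^[k] (fun y : ℝ => max y 0 ^ α) (x - k) := by
  rw [fwdDiff_iter_eq_sum_shift, hkFun, ← sum_range_reflect]
  refine sum_congr rfl fun j hj => ?_
  have hjk : j ≤ k := Nat.lt_succ_iff.mp (mem_range.mp hj)
  rw [Nat.add_sub_cancel, Nat.choose_symm hjk, Nat.cast_sub hjk, zsmul_eq_mul]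
  push_cast
  ring_nf

theorem hasDerivAt_max_zero_rpow (b : ℝ) {y : ℝ} (hy : 0 < y) :
    HasDerivAt (fun y : ℝ => max y 0 ^ b) (b * max y 0 ^ (b - 1)) y := by
  have hmax : (fun y : ℝ => max y 0 ^ b) =ᶠ[nhds y] fun y => y ^ b := by
    filter_upwards [lt_mem_nhds hy] with z hz
    rw [max_eq_left hz.le]
  rw [max_eq_left hy.le]
  exact (Real.hasDerivAt_rpow_const (Or.inl hy.ne')).congr_of_eventuallyEq hmax

theorem Real.rpow_le_rpow_abs_mul_rpow {x y r c : ℝ} (hy : 0 < y) (hyx : y ≤ x)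
    (hxy : x ≤ r * y) : y ^ c ≤ r ^ |c| * x ^ c := by
  have hr : 1 ≤ r := by nlinarith
  rcases le_or_gt 0 c with hc | hc
  · calc y ^ c ≤ x ^ c := Real.rpow_le_rpow hy.le hyx hc
      _ ≤ r ^ |c| * x ^ c :=
        le_mul_of_one_le_left (Real.rpow_nonneg (by linarith) c)
          (Real.one_le_rpow hr (abs_nonneg c))
  · have hxr : x / r ≤ y := (div_le_iff₀ (by linarith)).2 (by linarith)
    calc y ^ c ≤ (x / r) ^ c :=
          Real.rpow_le_rpow_of_nonpos (div_pos (by linarith) (by linarith)) hxr hc.le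
      _ = r ^ |c| * x ^ c := by
        rw [Real.div_rpow (by linarith) (by linarith), abs_of_neg hc, Real.rpow_neg (by linarith)]
        ring

theorem abs_hkFun_le (k : ℕ) (α : ℝ) {x : ℝ} (hx : (k : ℝ) + 1 ≤ x) :
    |hkFun k α x| ≤ |∏ i ∈ range k, (α - i)| * ((k : ℝ) + 1) ^ |α - k| * x ^ (α - k) := by
  set f : ℕ → ℝ → ℝ := fun i y => (∏ j ∈ range i, (α - j)) * max y 0 ^ (α - i)
  have hf : ∀ i y, 0 < y → HasDerivAt (f i) (f (i + 1) y) y := fun i y hy => by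
    refine ((hasDerivAt_max_zero_rpow (α - i) hy).const_mul _).congr_deriv ?_
    simp only [f, prod_range_succ, Nat.cast_succ]
    ring_nf
  have hf0 : f 0 = fun y => max y 0 ^ α := by simp [f]
  rw [hkFun_eq_fwdDiff_iter, ← hf0]
  refine abs_fwdDiff_iter_le_of_hasDerivAt k f hf (by linarith) fun y hy => ?_
  have hy0 : 0 < y := by linarith [hy.1]
  simp only [f, abs_mul, max_eq_left hy0.le, abs_of_pos (Real.rpow_pos_of_pos hy0 _), mul_assoc]
  refine mul_le_mul_of_nonneg_left (Real.rpow_le_rpow_abs_mul_rpow hy0 (by linarith [hy.2]) ?_)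
    (abs_nonneg _)
  nlinarith [hy.1]

theorem exists_abs_hkFun_le_mul_rpow (k : ℕ) (α : ℝ) :
    ∃ C > (0 : ℝ), ∀ x : ℝ, (k : ℝ) + 1 ≤ x → |hkFun k α x| ≤ C * x ^ (α - k) := by
  refine ⟨(|∏ i ∈ range k, (α - i)| + 1) * ((k : ℝ) + 1) ^ |α - k|, by positivity,
    fun x hx => (abs_hkFun_le k α hx).trans ?_⟩
  gcongr
  · exact Real.rpow_nonneg (by linarith [(k.cast_nonneg : (0 : ℝ) ≤ k)]) _
  · linarith

theorem hkFun_of_nonpos (k : ℕ) {α x : ℝ} (hα : α ≠ 0) (hx : x ≤ 0) : hkFun k α x = 0 :=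
  sum_eq_zero fun j _ => by
    rw [max_eq_right (by linarith [(j.cast_nonneg : (0 : ℝ) ≤ j)]), Real.zero_rpow hα, mul_zero]

theorem continuous_hkFun (k : ℕ) {α : ℝ} (hα : 0 ≤ α) : Continuous (hkFun k α) :=
  continuous_finsetSum _ fun _ _ => continuous_const.mul
    (((continuous_id.sub continuous_const).max continuous_const).rpow_const fun _ => Or.inr hα)

theorem Real.rpow_le_mul_rpow_mul {a C x c p : ℝ} (ha : 0 ≤ a) (hC : 0 ≤ C) (hx : 0 ≤ x)
    (hp : 0 ≤ p) (h : a ≤ C * x ^ c) : a ^ p ≤ C ^ p * x ^ (p * c) := by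
  calc a ^ p ≤ (C * x ^ c) ^ p := Real.rpow_le_rpow ha h hp
    _ = C ^ p * x ^ (p * c) := by
      rw [Real.mul_rpow hC (Real.rpow_nonneg hx c), ← Real.rpow_mul hx, mul_comm c]

theorem summable_sSup_image_Icc_of_le_rpow {g : ℝ → ℝ} {C c x₀ : ℝ} (hc : c < -1)
    (hg₀ : ∀ x, 0 ≤ g x) (hx₀ : 0 < x₀) (hC : 0 ≤ C) (hg : ∀ x, x₀ ≤ x → g x ≤ C * x ^ c) :
    Summable fun l : ℕ => sSup ((fun u => g (l + u)) '' Icc 0 1) := by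
  refine ((Real.summable_nat_rpow.2 hc).mul_left C).of_norm_bounded_eventually_nat ?_
  filter_upwards [Filter.eventually_ge_atTop ⌈x₀⌉₊] with l hl
  have hl : x₀ ≤ l := (Nat.le_ceil x₀).trans (by exact_mod_cast hl)
  rw [Real.norm_of_nonneg (Real.sSup_nonneg (by rintro _ ⟨u, -, rfl⟩; exact hg₀ _))]
  refine Real.sSup_le ?_ (mul_nonneg hC (Real.rpow_nonneg (by linarith) c))
  rintro _ ⟨u, hu, rfl⟩
  calc g (l + u) ≤ C * (l + u) ^ c := hg _ (by linarith [hu.1])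
    _ ≤ C * l ^ c := mul_le_mul_of_nonneg_left
      (Real.rpow_le_rpow_of_nonpos (by linarith) (by linarith [hu.1]) (by linarith)) hC

theorem integrable_of_abs_le_rpow {g : ℝ → ℝ} {C c x₀ : ℝ} (hc : c < -1) (hg : Continuous g)
    (hg₀ : ∀ x ≤ 0, g x = 0) (hx₀ : 0 < x₀) (hbound : ∀ x, x₀ ≤ x → |g x| ≤ C * x ^ c) :
    Integrable g := by
  rw [← integrableOn_univ, ← Iic_union_Ioi (a := x₀), ← Iic_union_Icc_eq_Iic hx₀.le]
  refine (IntegrableOn.union ?_ hg.integrableOn_Icc).union ?_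
  · exact integrableOn_zero.congr_fun (fun x hx => (hg₀ x hx).symm) measurableSet_Iic
  · refine Integrable.mono' (((integrableOn_Ioi_rpow_iff hx₀).2 hc).const_mul C)
      hg.aestronglyMeasurable.restrict (ae_restrict_of_forall_mem measurableSet_Ioi ?_)
    exact fun x hx => (Real.norm_eq_abs _).trans_le (hbound x (le_of_lt hx))

theorem stmt_15_general (k : ℕ) (α : ℝ) (hα : 0 < α) :
    (∃ C > (0 : ℝ), ∀ x : ℝ, (k : ℝ) + 1 ≤ x → |hkFun k α x| ≤ C * x ^ (α - k)) ∧
    (∀ p : ℝ, 0 < p → p * (α - k) < -1 →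
      Summable (fun l : ℕ =>
        sSup ((fun u : ℝ => |hkFun k α ((l : ℝ) + u)| ^ p) '' Set.Icc (0 : ℝ) 1))) ∧
    (∀ β : ℝ, 0 < β → β * (α - k) < -1 →
      ∫⁻ x : ℝ, ENNReal.ofReal (|hkFun k α x| ^ β) < ⊤) := by
  obtain ⟨C, hC, hdecay⟩ := exists_abs_hkFun_le_mul_rpow k α
  have hk₁ : (0 : ℝ) < k + 1 := by positivity
  have hdecay_rpow : ∀ p : ℝ, 0 < p → ∀ x : ℝ, (k : ℝ) + 1 ≤ x →
      |hkFun k α x| ^ p ≤ C ^ p * x ^ (p * (α - k)) := fun p hp x hx =>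
    Real.rpow_le_mul_rpow_mul (abs_nonneg _) hC.le (by linarith) hp.le (hdecay x hx)
  refine ⟨⟨C, hC, hdecay⟩, fun p hp hpk => ?_, fun β hβ hβk => ?_⟩
  · exact summable_sSup_image_Icc_of_le_rpow (g := fun x => |hkFun k α x| ^ p) hpk
      (fun _ => Real.rpow_nonneg (abs_nonneg _) p) hk₁ (Real.rpow_nonneg hC.le p) (hdecay_rpow p hp)
  · have hint : Integrable (fun x => |hkFun k α x| ^ β) := by
      refine integrable_of_abs_le_rpow (C := C ^ β) hβk
        ((continuous_hkFun k hα.le).abs.rpow_const fun _ => Or.inr hβ.le) (fun x hx => ?_) hk₁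
        fun x hx => ?_
      · rw [hkFun_of_nonpos k hα.ne' hx, abs_zero, Real.zero_rpow hβ.ne']
      · rw [abs_of_nonneg (Real.rpow_nonneg (abs_nonneg _) β)]
        exact hdecay_rpow β hβ x hx
    exact hint.lintegral_lt_top

/-- Decay and integrability properties of `h_k`. -/
theorem stmt_15 (k : ℕ) (hk : 1 ≤ k) (α : ℝ) (hα : 0 < α) :
    (∃ C > (0 : ℝ), ∀ x : ℝ, (k : ℝ) + 1 ≤ x → |hkFun k α x| ≤ C * x ^ (α - k)) ∧
    (∀ p : ℝ, 0 < p → p * (α - k) < -1 →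
      Summable (fun l : ℕ =>
        sSup ((fun u : ℝ => |hkFun k α ((l : ℝ) + u)| ^ p) '' Set.Icc (0 : ℝ) 1))) ∧
    (∀ β : ℝ, 0 < β → β * (α - k) < -1 →
      ∫⁻ x : ℝ, ENNReal.ofReal (|hkFun k α x| ^ β) < ⊤) :=
  stmt_15_general k α hα

end
end
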